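/- (Averaging step for the second generalized distance.) Let n ≥ 1, d ≥ 1, let F be a nonempty finite family of F_2-subspaces of F_2^n, and let B ≥ 1 be a natural number such that every unordered pair of distinct nonzero vectors of F_2^n, each of even Hamming weight, is contained in exactly B members of F. If B · (1/8)·Σ_{t=1}^{d−1} C(n,t)·(3^t + 1) ≤ |F|/n, then the number of members C ∈ F containing some pair of distinct nonzero even-weight vectors u, v with |supp(u) ∪ supp(v)| ≤ d − 1 is at most |F|/n; in particular, at least (1 − 1/n)·|F| members of F have second generalized distance at least d when restricted to even-weight codewords. -/

import Mathlib

open scoped Classical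

def supp {n : ℕ} (u : Fin n → ZMod 2) : Finset (Fin n) :=
  Finset.univ.filter fun i => u i ≠ 0

/-
Call an ordered pair `(u, v)` of distinct nonzero even-weight vectors *bad* if its joint support
has at most `m` coordinates. A member `C` containing a bad pair `(u, v)` also contains `u + v`,
and all six ordered pairs of distinct elements of `{u, v, u + v}` are bad; since each bad pair
lies in at most `B` members, double counting gives `6 · #(bad members) ≤ B · #(bad pairs)`.

For a fixed joint support `S` with `|S| = t`, a pair is determined by `A = supp u` (of even size)
and `supp v ∩ A`, so there are `∑_{A ⊆ S, |A| even} 2^|A| = (3^t + (-1)^t) / 2` of them, whence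
`2 · #(bad pairs) ≤ ∑_{t=1}^{m} C(n,t) (3^t + 1)`. Together, `12 · #(bad members)` is at most
`B ∑_{t=1}^{m} C(n,t) (3^t + 1) ≤ 8 |F| / n`.
-/

open Finset

section HammingParity

variable {ι : Type*}

theorem add_eq_zero_iff_eq_of_zmod_two {u v : ι → ZMod 2} : u + v = 0 ↔ u = v := by
  rw [add_eq_zero_iff_eq_neg, show -v = v from funext fun i => ZMod.neg_eq_self_mod_two _]

variable [Fintype ι]

theorem natCast_hammingNorm_eq_sum (u : ι → ZMod 2) : (hammingNorm u : ZMod 2) = ∑ i, u i := by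
  rw [hammingNorm, natCast_card_filter]
  refine sum_congr rfl fun i _ => ?_
  generalize u i = a
  revert a
  decide

theorem even_hammingNorm_iff (u : ι → ZMod 2) : Even (hammingNorm u) ↔ ∑ i, u i = 0 := by
  rw [← ZMod.natCast_eq_zero_iff_even, natCast_hammingNorm_eq_sum]

theorem even_hammingNorm_add {u v : ι → ZMod 2} (hu : Even (hammingNorm u))
    (hv : Even (hammingNorm v)) : Even (hammingNorm (u + v)) := by
  rw [even_hammingNorm_iff] at hu hv ⊢
  simp [sum_add_distrib, hu, hv]

end HammingParity

section Support

variable {n : ℕ}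

theorem mem_supp {u : Fin n → ZMod 2} {i : Fin n} : i ∈ supp u ↔ u i ≠ 0 := by
  simp [supp]

theorem supp_injective : Function.Injective (supp (n := n)) := by
  intro u v h
  funext i
  have hi : u i ≠ 0 ↔ v i ≠ 0 := by rw [← mem_supp, ← mem_supp, h]
  revert hi
  generalize u i = a
  generalize v i = b
  revert a b
  decide

theorem supp_add_subset (u v : Fin n → ZMod 2) : supp (u + v) ⊆ supp u ∪ supp v := by
  intro i
  simp only [mem_union, mem_supp, Pi.add_apply]
  contrapose!
  rintro ⟨hu, hv⟩
  simp [hu, hv]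

theorem supp_nonempty {u : Fin n → ZMod 2} (hu : u ≠ 0) : (supp u).Nonempty :=
  let ⟨i, hi⟩ := Function.ne_iff.mp hu
  ⟨i, mem_supp.mpr hi⟩

end Support

section Counting

variable {n : ℕ}

theorem two_mul_sum_powerset_even_pow {α R : Type*} [CommRing R] (S : Finset α) (x : R) :
    2 * ∑ A ∈ S.powerset with Even #A, x ^ #A = (1 + x) ^ #S + (1 - x) ^ #S := by
  have binomial (y : R) : ∑ A ∈ S.powerset, y ^ #A = (y + 1) ^ #S := by
    simpa using sum_pow_mul_eq_add_pow y 1 S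
  rw [add_comm 1 x, sub_eq_neg_add, ← binomial, ← binomial, ← sum_add_distrib, sum_filter,
    mul_sum]
  refine sum_congr rfl fun A _ => ?_
  rcases Nat.even_or_odd #A with hA | hA
  · rw [if_pos hA, hA.neg_pow]
    ring
  · rw [if_neg (Nat.not_even_iff_odd.2 hA), hA.neg_pow]
    ring

theorem card_supp_eq_supp_union_eq_le (S A : Finset (Fin n)) :
    #{p : (Fin n → ZMod 2) × (Fin n → ZMod 2) | supp p.1 = A ∧ supp p.1 ∪ supp p.2 = S}
      ≤ 2 ^ #A := by
  rw [← card_powerset]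
  refine card_le_card_of_injOn (fun p => supp p.2 ∩ A)
    (fun p _ => mem_powerset.2 inter_subset_right) ?_
  have supp_snd : ∀ p ∈ ({p | supp p.1 = A ∧ supp p.1 ∪ supp p.2 = S} :
      Finset ((Fin n → ZMod 2) × (Fin n → ZMod 2))), supp p.2 = S \ A ∪ (supp p.2 ∩ A) := by
    intro p hp
    obtain ⟨hA, hS⟩ := (mem_filter.1 hp).2
    rw [← hS, hA, union_sdiff_left, sdiff_union_inter]
  intro p hp q hq hpq
  have hp' := (mem_filter.1 hp).2.1
  have hq' := (mem_filter.1 hq).2.1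
  exact Prod.ext (supp_injective (hp'.trans hq'.symm))
    (supp_injective (by rw [supp_snd p hp, supp_snd q hq]; exact congrArg _ hpq))

theorem two_mul_card_even_supp_union_eq_le (S : Finset (Fin n)) :
    2 * #{p : (Fin n → ZMod 2) × (Fin n → ZMod 2) |
      Even (hammingNorm p.1) ∧ supp p.1 ∪ supp p.2 = S} ≤ 3 ^ #S + 1 := by
  set E : Finset ((Fin n → ZMod 2) × (Fin n → ZMod 2)) :=
    {p | Even (hammingNorm p.1) ∧ supp p.1 ∪ supp p.2 = S}
  have maps_to : ∀ p ∈ E, supp p.1 ∈ S.powerset.filter (Even #·) := by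
    intro p hp
    obtain ⟨heven, hS⟩ := (mem_filter.1 hp).2
    exact mem_filter.2 ⟨mem_powerset.2 (hS ▸ subset_union_left), heven⟩
  have even_sum : (2 * ∑ A ∈ S.powerset with Even #A, 2 ^ #A : ℤ) ≤ 3 ^ #S + 1 := by
    rw [two_mul_sum_powerset_even_pow]
    rcases neg_one_pow_eq_or ℤ #S with h | h <;> norm_num [h]
  calc 2 * #E = 2 * ∑ A ∈ S.powerset with Even #A, #{p ∈ E | supp p.1 = A} := by
        rw [card_eq_sum_card_fiberwise maps_to]
    _ ≤ 2 * ∑ A ∈ S.powerset with Even #A, 2 ^ #A := by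
        gcongr with A
        refine (card_le_card fun p hp => ?_).trans (card_supp_eq_supp_union_eq_le S A)
        obtain ⟨hpE, hA⟩ := mem_filter.1 hp
        exact mem_filter.2 ⟨mem_univ _, hA, (mem_filter.1 hpE).2.2⟩
    _ ≤ 3 ^ #S + 1 := by exact_mod_cast even_sum

theorem two_mul_card_even_card_supp_union_eq_le (t : ℕ) :
    2 * #{p : (Fin n → ZMod 2) × (Fin n → ZMod 2) |
      Even (hammingNorm p.1) ∧ #(supp p.1 ∪ supp p.2) = t} ≤ n.choose t * (3 ^ t + 1) := by
  set E : Finset ((Fin n → ZMod 2) × (Fin n → ZMod 2)) :=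
    {p | Even (hammingNorm p.1) ∧ #(supp p.1 ∪ supp p.2) = t}
  have maps_to : ∀ p ∈ E, supp p.1 ∪ supp p.2 ∈ powersetCard t (univ : Finset (Fin n)) :=
    fun p hp => mem_powersetCard.2 ⟨subset_univ _, (mem_filter.1 hp).2.2⟩
  calc 2 * #E = ∑ S ∈ powersetCard t univ, 2 * #{p ∈ E | supp p.1 ∪ supp p.2 = S} := by
        rw [card_eq_sum_card_fiberwise maps_to, mul_sum]
    _ ≤ ∑ S ∈ powersetCard t (univ : Finset (Fin n)), (3 ^ t + 1) := by
        refine sum_le_sum fun S hS => ?_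
        rw [← (mem_powersetCard.1 hS).2]
        refine (Nat.mul_le_mul_left 2 (card_le_card fun p hp => ?_)).trans
          (two_mul_card_even_supp_union_eq_le S)
        obtain ⟨hpE, hS⟩ := mem_filter.1 hp
        exact mem_filter.2 ⟨mem_univ _, (mem_filter.1 hpE).2.1, hS⟩
    _ = n.choose t * (3 ^ t + 1) := by simp

end Counting

section BadPairs

variable {n : ℕ}

def IsBadPair (m : ℕ) (u v : Fin n → ZMod 2) : Prop :=
  u ≠ v ∧ u ≠ 0 ∧ v ≠ 0 ∧ Even (hammingNorm u) ∧ Even (hammingNorm v) ∧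
    #(supp u ∪ supp v) ≤ m

def ContainsBadPair (m : ℕ) (C : Submodule (ZMod 2) (Fin n → ZMod 2)) : Prop :=
  ∃ u v, u ∈ C ∧ v ∈ C ∧ IsBadPair m u v

noncomputable def badPairs (n m : ℕ) : Finset ((Fin n → ZMod 2) × (Fin n → ZMod 2)) :=
  {p | IsBadPair m p.1 p.2}

theorem six_le_card_filter_badPairs_of_containsBadPair {m : ℕ}
    {C : Submodule (ZMod 2) (Fin n → ZMod 2)} (hC : ContainsBadPair m C) : 6 ≤ #{p ∈ badPairs n m | p.1 ∈ C ∧ p.2 ∈ C} := by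
  obtain ⟨u, v, huC, hvC, huv, hu, hv, heu, hev, hm⟩ := hC
  have hw : u + v ≠ 0 := fun h => huv (add_eq_zero_iff_eq_of_zmod_two.1 h)
  have huw : u ≠ u + v := fun h => hv (by simpa using h)
  have hvw : v ≠ u + v := fun h => hu (by simpa using h)
  have triple : ∀ x ∈ ({u, v, u + v} : Finset (Fin n → ZMod 2)),
      x ≠ 0 ∧ Even (hammingNorm x) ∧ x ∈ C ∧ supp x ⊆ supp u ∪ supp v := by
    simp only [mem_insert, mem_singleton]
    rintro x (rfl | rfl | rfl)
    · exact ⟨hu, heu, huC, subset_union_left⟩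
    · exact ⟨hv, hev, hvC, subset_union_right⟩
    · exact ⟨hw, even_hammingNorm_add heu hev, C.add_mem huC hvC, supp_add_subset u v⟩
  have card_triple : #({u, v, u + v} : Finset (Fin n → ZMod 2)) = 3 :=
    card_eq_three.2 ⟨u, v, u + v, huv, huw, hvw, rfl⟩
  calc 6 = #({u, v, u + v} : Finset (Fin n → ZMod 2)).offDiag := by
        rw [offDiag_card, card_triple]
    _ ≤ #{p ∈ badPairs n m | p.1 ∈ C ∧ p.2 ∈ C} := card_le_card fun p hp => by
        obtain ⟨hp₁, hp₂, hne⟩ := mem_offDiag.1 hp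
        obtain ⟨h₁, he₁, hC₁, hs₁⟩ := triple _ hp₁
        obtain ⟨h₂, he₂, hC₂, hs₂⟩ := triple _ hp₂
        exact mem_filter.2 ⟨mem_filter.2 ⟨mem_univ _, hne, h₁, h₂, he₁, he₂,
          (card_le_card (union_subset hs₁ hs₂)).trans hm⟩, hC₁, hC₂⟩

theorem two_mul_card_badPairs_le (n m : ℕ) :
    2 * #(badPairs n m) ≤ ∑ t ∈ Icc 1 m, n.choose t * (3 ^ t + 1) := by
  have maps_to : ∀ p ∈ badPairs n m, #(supp p.1 ∪ supp p.2) ∈ Icc 1 m := by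
    intro p hp
    obtain ⟨-, hu, -, -, -, hm⟩ := (mem_filter.1 hp).2
    exact mem_Icc.2 ⟨card_pos.2 ((supp_nonempty hu).mono subset_union_left), hm⟩
  rw [card_eq_sum_card_fiberwise maps_to, mul_sum]
  refine sum_le_sum fun t _ => ?_
  refine (Nat.mul_le_mul_left 2 (card_le_card fun p hp => ?_)).trans
    (two_mul_card_even_card_supp_union_eq_le t)
  obtain ⟨hpP, ht⟩ := mem_filter.1 hp
  exact mem_filter.2 ⟨mem_univ _, (mem_filter.1 hpP).2.2.2.2.1, ht⟩

theorem twelve_mul_card_containsBadPair_le (F : Finset (Submodule (ZMod 2) (Fin n → ZMod 2)))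
    {m B : ℕ} (hB : ∀ u v, IsBadPair m u v → #{C ∈ F | u ∈ C ∧ v ∈ C} ≤ B) :
    12 * #{C ∈ F | ContainsBadPair m C} ≤ B * ∑ t ∈ Icc 1 m, n.choose t * (3 ^ t + 1) := by
  have double_count : #{C ∈ F | ContainsBadPair m C} * 6 ≤ #(badPairs n m) * B :=
    card_mul_le_card_mul (fun (C : Submodule (ZMod 2) (Fin n → ZMod 2))
      (p : (Fin n → ZMod 2) × (Fin n → ZMod 2)) => p.1 ∈ C ∧ p.2 ∈ C)
      (fun C hC => six_le_card_filter_badPairs_of_containsBadPair (mem_filter.1 hC).2)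
      (fun p hp => (card_le_card (filter_subset_filter _ (filter_subset _ _))).trans
        (hB p.1 p.2 (mem_filter.1 hp).2))
  calc 12 * #{C ∈ F | ContainsBadPair m C}
      = 2 * (#{C ∈ F | ContainsBadPair m C} * 6) := by ring
    _ ≤ 2 * #(badPairs n m) * B := by rw [mul_assoc]; gcongr
    _ ≤ (∑ t ∈ Icc 1 m, n.choose t * (3 ^ t + 1)) * B := by
        gcongr
        exact two_mul_card_badPairs_le n m
    _ = B * ∑ t ∈ Icc 1 m, n.choose t * (3 ^ t + 1) := mul_comm _ _

theorem forall_le_card_supp_union_of_not_containsBadPair {d : ℕ}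
    {C : Submodule (ZMod 2) (Fin n → ZMod 2)} (hC : ¬ ContainsBadPair (d - 1) C) :
    ∀ u ∈ C, ∀ v ∈ C, u ≠ v → u ≠ 0 → v ≠ 0 → Even (hammingNorm u) → Even (hammingNorm v) →
      d ≤ #(supp u ∪ supp v) := by
  intro u hu v hv huv hu0 hv0 heu hev
  by_contra! h
  exact hC ⟨u, v, hu, hv, huv, hu0, hv0, heu, hev, by omega⟩

end BadPairs

theorem vg_averaging_second_distance_general (n d : ℕ)
    (F : Finset (Submodule (ZMod 2) (Fin n → ZMod 2)))
    (B : ℕ)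
    (hB : ∀ u v : Fin n → ZMod 2, u ≠ v → u ≠ 0 → v ≠ 0 →
      Even (hammingNorm u) → Even (hammingNorm v) →
      (F.filter (fun C => u ∈ C ∧ v ∈ C)).card = B)
    (hcount : (B : ℚ) * ((1 : ℚ) / 8) *
        ∑ t ∈ Finset.Icc 1 (d - 1), (n.choose t : ℚ) * ((3 : ℚ) ^ t + 1)
      ≤ (F.card : ℚ) / n) :
    ((F.filter (fun C => ∃ u v : Fin n → ZMod 2, u ∈ C ∧ v ∈ C ∧ u ≠ v ∧
        u ≠ 0 ∧ v ≠ 0 ∧ Even (hammingNorm u) ∧ Even (hammingNorm v) ∧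
        (supp u ∪ supp v).card ≤ d - 1)).card : ℚ) ≤ (F.card : ℚ) / n ∧
    (1 - 1 / (n : ℚ)) * (F.card : ℚ) ≤
      ((F.filter (fun C => ∀ u ∈ C, ∀ v ∈ C, u ≠ v → u ≠ 0 → v ≠ 0 →
        Even (hammingNorm u) → Even (hammingNorm v) →
        d ≤ (supp u ∪ supp v).card)).card : ℚ) := by
  have twelve_mul : (12 * #{C ∈ F | ContainsBadPair (d - 1) C} : ℚ) ≤
      B * ∑ t ∈ Icc 1 (d - 1), (n.choose t : ℚ) * (3 ^ t + 1) := by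
    exact_mod_cast twelve_mul_card_containsBadPair_le (m := d - 1) F
      fun u v ⟨huv, hu, hv, heu, hev, _⟩ => (hB u v huv hu hv heu hev).le
  have bad_le : (#{C ∈ F | ContainsBadPair (d - 1) C} : ℚ) ≤ #F / n := by
    have : (0 : ℚ) ≤ B * ∑ t ∈ Icc 1 (d - 1), (n.choose t : ℚ) * (3 ^ t + 1) := by
      positivity
    linarith
  have split : #F ≤ #{C ∈ F | ContainsBadPair (d - 1) C} +
      #{C ∈ F | ∀ u ∈ C, ∀ v ∈ C, u ≠ v → u ≠ 0 → v ≠ 0 → Even (hammingNorm u) →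
        Even (hammingNorm v) → d ≤ #(supp u ∪ supp v)} := by
    rw [← card_filter_add_card_filter_not (s := F) (ContainsBadPair (d - 1))]
    refine Nat.add_le_add_left (card_le_card fun C hC => ?_) _
    obtain ⟨hCF, hC⟩ := mem_filter.1 hC
    exact mem_filter.2 ⟨hCF, forall_le_card_supp_union_of_not_containsBadPair hC⟩
  constructor
  · -- the statement decides `∃ u v, …` by `Fintype` instances, not `Classical.propDecidable`
    convert bad_le using 4
    rfl
  · rw [one_sub_mul, one_div_mul_eq_div]
    have := (Nat.cast_le (α := ℚ)).2 split
    push_cast at this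
    linarith

/-- averaging step for the second generalized distance: Let `n ≥ 1`,
`d ≥ 1`, let `F` be a nonempty finite family of `F_2`-subspaces of `F_2^n`, and let
`B ≥ 1` be such that every unordered pair of distinct nonzero even-weight vectors is
contained in exactly `B` members of `F`.  If
`B · (1/8)·Σ_{t=1}^{d−1} C(n,t)·(3^t + 1) ≤ |F|/n`, then the number of members of `F`
containing a pair of distinct nonzero even-weight vectors `u, v` with
`|supp(u) ∪ supp(v)| ≤ d − 1` is at most `|F|/n`; in particular at least
`(1 − 1/n)·|F|` members have second generalized distance at least `d` when restricted to
even-weight codewords. -/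
theorem vg_averaging_second_distance (n d : ℕ) (hn : 1 ≤ n) (hd : 1 ≤ d)
    (F : Finset (Submodule (ZMod 2) (Fin n → ZMod 2))) (hF : F.Nonempty)
    (B : ℕ) (hB1 : 1 ≤ B)
    (hB : ∀ u v : Fin n → ZMod 2, u ≠ v → u ≠ 0 → v ≠ 0 →
      Even (hammingNorm u) → Even (hammingNorm v) →
      (F.filter (fun C => u ∈ C ∧ v ∈ C)).card = B)
    (hcount : (B : ℚ) * ((1 : ℚ) / 8) *
        ∑ t ∈ Finset.Icc 1 (d - 1), (n.choose t : ℚ) * ((3 : ℚ) ^ t + 1)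
      ≤ (F.card : ℚ) / n) :
    ((F.filter (fun C => ∃ u v : Fin n → ZMod 2, u ∈ C ∧ v ∈ C ∧ u ≠ v ∧
        u ≠ 0 ∧ v ≠ 0 ∧ Even (hammingNorm u) ∧ Even (hammingNorm v) ∧
        (supp u ∪ supp v).card ≤ d - 1)).card : ℚ) ≤ (F.card : ℚ) / n ∧
    (1 - 1 / (n : ℚ)) * (F.card : ℚ) ≤
      ((F.filter (fun C => ∀ u ∈ C, ∀ v ∈ C, u ≠ v → u ≠ 0 → v ≠ 0 →
        Even (hammingNorm u) → Even (hammingNorm v) →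
        d ≤ (supp u ∪ supp v).card)).card : ℚ) :=
  vg_averaging_second_distance_general n d F B hB hcount
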